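/- arXiv:0811.1492 — 5 statements merged into one kernel-verified Lean document; each statement's English description precedes it below -/
import Mathlib

section
/- The expression I₂ = cₓ − a aₓ/2 − b a_y/2 − aₓₓ/2 + (bₓ a²/4 − bₓ c + bₓ aₓ/2)/b is invariant under gauge transformations of the parabolic operator L = Dx² + a·Dx + b·Dy + c: if L^g = Dx² + a₁·Dx + b₁·Dy + c₁ with a₁ = a + 2gₓ/g, b₁ = b, c₁ = c + (gₓₓ + a gₓ + b g_y)/g, then I₂ computed from (a₁, b₁, c₁) equals I₂ computed from (a, b, c). -/
noncomputable section
open Real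

/-- Smooth functions on the plane, as plain functions `ℝ × ℝ → ℝ`. -/
abbrev F := (ℝ × ℝ) → ℝ

/-- Partial derivative in `x`. -/
noncomputable def Dx (f : F) : F := fun p => fderiv ℝ f p (1, 0)

/-- Partial derivative in `y`. -/
noncomputable def Dy (f : F) : F := fun p => fderiv ℝ f p (0, 1)

/-- The parabolic operator `L = Dx² + a·Dx + b·Dy + c`. -/
noncomputable def Lop (a b c : F) (u : F) : F :=
  fun p => Dx (Dx u) p + a p * Dx u p + b p * Dy u p + c p * u p

/-- The second basic gauge invariant of the parabolic operator. -/
noncomputable def I2 (a b c : F) : F :=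
  Dx c - a * Dx a / 2 - b * Dy a / 2 - Dx (Dx a) / 2
    + (Dx b * a ^ 2 / 4 - Dx b * c + Dx b * Dx a / 2) / b

namespace I2aux

lemma contDiff_Dx {f : F} (hf : ContDiff ℝ (⊤ : ℕ∞) f) : ContDiff ℝ (⊤ : ℕ∞) (Dx f) := by
  have h := hf.fderiv_right (m := (⊤ : ℕ∞)) (by simp)
  exact h.clm_apply contDiff_const

lemma contDiff_Dy {f : F} (hf : ContDiff ℝ (⊤ : ℕ∞) f) : ContDiff ℝ (⊤ : ℕ∞) (Dy f) := by
  have h := hf.fderiv_right (m := (⊤ : ℕ∞)) (by simp)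
  exact h.clm_apply contDiff_const

lemma Dx_add {f h : F} (hf : ContDiff ℝ (⊤ : ℕ∞) f) (hh : ContDiff ℝ (⊤ : ℕ∞) h) :
    Dx (f + h) = Dx f + Dx h := by
  funext p
  show fderiv ℝ (fun q => f q + h q) p (1, 0) = _
  rw [fderiv_fun_add (hf.differentiable (by simp) p) (hh.differentiable (by simp) p)]
  rfl

lemma Dx_sub {f h : F} (hf : ContDiff ℝ (⊤ : ℕ∞) f) (hh : ContDiff ℝ (⊤ : ℕ∞) h) :
    Dx (f - h) = Dx f - Dx h := by
  funext p
  show fderiv ℝ (fun q => f q - h q) p (1, 0) = _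
  rw [fderiv_fun_sub (hf.differentiable (by simp) p) (hh.differentiable (by simp) p)]
  rfl

lemma Dx_mul {f h : F} (hf : ContDiff ℝ (⊤ : ℕ∞) f) (hh : ContDiff ℝ (⊤ : ℕ∞) h) :
    Dx (f * h) = Dx f * h + f * Dx h := by
  funext p
  show fderiv ℝ (fun q => f q * h q) p (1, 0) = _
  rw [fderiv_fun_mul (hf.differentiable (by simp) p) (hh.differentiable (by simp) p)]
  show f p * fderiv ℝ h p (1, 0) + h p * fderiv ℝ f p (1, 0) = _
  show _ = Dx f p * h p + f p * Dx h p
  simp only [Dx]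
  ring

lemma Dy_add {f h : F} (hf : ContDiff ℝ (⊤ : ℕ∞) f) (hh : ContDiff ℝ (⊤ : ℕ∞) h) :
    Dy (f + h) = Dy f + Dy h := by
  funext p
  show fderiv ℝ (fun q => f q + h q) p (0, 1) = _
  rw [fderiv_fun_add (hf.differentiable (by simp) p) (hh.differentiable (by simp) p)]
  rfl

lemma Dy_mul {f h : F} (hf : ContDiff ℝ (⊤ : ℕ∞) f) (hh : ContDiff ℝ (⊤ : ℕ∞) h) :
    Dy (f * h) = Dy f * h + f * Dy h := by
  funext p
  show fderiv ℝ (fun q => f q * h q) p (0, 1) = _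
  rw [fderiv_fun_mul (hf.differentiable (by simp) p) (hh.differentiable (by simp) p)]
  show f p * fderiv ℝ h p (0, 1) + h p * fderiv ℝ f p (0, 1) = _
  show _ = Dy f p * h p + f p * Dy h p
  simp only [Dy]
  ring

lemma Dx_div {f h : F} (hf : ContDiff ℝ (⊤ : ℕ∞) f) (hh : ContDiff ℝ (⊤ : ℕ∞) h)
    (hh0 : ∀ p, h p ≠ 0) :
    Dx (f / h) = (Dx f * h - f * Dx h) / (h * h) := by
  have hq : ContDiff ℝ (⊤ : ℕ∞) (f / h) := hf.div hh hh0
  have key := Dx_mul hq hh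
  have hfh : (f / h) * h = f := by
    funext p
    exact div_mul_cancel₀ (f p) (hh0 p)
  rw [hfh] at key
  funext p
  have kp := congrFun key p
  have h0 := hh0 p
  simp only [Pi.add_apply, Pi.mul_apply, Pi.div_apply, Pi.sub_apply] at kp ⊢
  field_simp at kp ⊢
  linarith [kp]

lemma Dy_div {f h : F} (hf : ContDiff ℝ (⊤ : ℕ∞) f) (hh : ContDiff ℝ (⊤ : ℕ∞) h)
    (hh0 : ∀ p, h p ≠ 0) :
    Dy (f / h) = (Dy f * h - f * Dy h) / (h * h) := by
  have hq : ContDiff ℝ (⊤ : ℕ∞) (f / h) := hf.div hh hh0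
  have key := Dy_mul hq hh
  have hfh : (f / h) * h = f := by
    funext p
    exact div_mul_cancel₀ (f p) (hh0 p)
  rw [hfh] at key
  funext p
  have kp := congrFun key p
  have h0 := hh0 p
  simp only [Pi.add_apply, Pi.mul_apply, Pi.div_apply, Pi.sub_apply] at kp ⊢
  field_simp at kp ⊢
  linarith [kp]

lemma Dx_two : Dx (2 : F) = 0 := by
  funext p
  show fderiv ℝ (fun _ : ℝ × ℝ => (2 : ℝ)) p (1, 0) = 0
  rw [fderiv_fun_const]
  rfl

lemma Dy_two : Dy (2 : F) = 0 := by
  funext p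
  show fderiv ℝ (fun _ : ℝ × ℝ => (2 : ℝ)) p (0, 1) = 0
  rw [fderiv_fun_const]
  rfl

lemma contDiff_two : ContDiff ℝ (⊤ : ℕ∞) (2 : F) := contDiff_const

lemma Dy_Dx {f : F} (hf : ContDiff ℝ (⊤ : ℕ∞) f) : Dy (Dx f) = Dx (Dy f) := by
  funext p
  have hdf : ContDiff ℝ (⊤ : ℕ∞) (fderiv ℝ f) := hf.fderiv_right (m := (⊤ : ℕ∞)) (by simp)
  have hsymm : IsSymmSndFDerivAt ℝ f p :=
    (hf.contDiffAt).isSymmSndFDerivAt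
      (by rw [minSmoothness_of_isRCLikeNormedField]; exact WithTop.coe_le_coe.mpr le_top)
  have e1 : Dy (Dx f) p = fderiv ℝ (fderiv ℝ f) p (0, 1) (1, 0) := by
    show fderiv ℝ (fun q => (fderiv ℝ f q) (1, 0)) p (0, 1) = _
    rw [fderiv_clm_apply (hdf.differentiable (by simp) p)
      (differentiableAt_const _)]
    simp
  have e2 : Dx (Dy f) p = fderiv ℝ (fderiv ℝ f) p (1, 0) (0, 1) := by
    show fderiv ℝ (fun q => (fderiv ℝ f q) (0, 1)) p (1, 0) = _
    rw [fderiv_clm_apply (hdf.differentiable (by simp) p)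
      (differentiableAt_const _)]
    simp
  rw [e1, e2, hsymm (0, 1) (1, 0)]

end I2aux

open I2aux in
theorem I2_gauge_invariant
    (a b c g : F) (ha : ContDiff ℝ (⊤ : ℕ∞) a) (hb : ContDiff ℝ (⊤ : ℕ∞) b)
    (hc : ContDiff ℝ (⊤ : ℕ∞) c) (hg : ContDiff ℝ (⊤ : ℕ∞) g)
    (hb0 : ∀ p, b p ≠ 0) (hg0 : ∀ p, g p ≠ 0) :
    I2 (a + 2 * Dx g / g) b (c + (Dx (Dx g) + a * Dx g + b * Dy g) / g)
      = I2 a b c := by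
  have hgx := contDiff_Dx hg
  have hgy := contDiff_Dy hg
  have hgxx := contDiff_Dx hgx
  have hgxy := contDiff_Dx hgy
  have hgxxx := contDiff_Dx hgxx
  have hax := contDiff_Dx ha
  have hbx := contDiff_Dx hb
  have hgg0 : ∀ p, g p * g p ≠ 0 := fun p => mul_ne_zero (hg0 p) (hg0 p)
  have hagx : ContDiff ℝ (⊤ : ℕ∞) (a * Dx g : F) := by exact ha.mul hgx
  have hbgy : ContDiff ℝ (⊤ : ℕ∞) (b * Dy g : F) := by exact hb.mul hgy
  have hE1 : ContDiff ℝ (⊤ : ℕ∞) (Dx (Dx g) + a * Dx g : F) := by exact hgxx.add hagx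
  have hE : ContDiff ℝ (⊤ : ℕ∞) (Dx (Dx g) + a * Dx g + b * Dy g : F) := by
    exact hE1.add hbgy
  -- derivative of E := Dx (Dx g) + a * Dx g + b * Dy g
  have eE : Dx (Dx (Dx g) + a * Dx g + b * Dy g)
      = Dx (Dx (Dx g)) + (Dx a * Dx g + a * Dx (Dx g))
        + (Dx b * Dy g + b * Dx (Dy g)) := by
    rw [Dx_add hE1 hbgy, Dx_add hgxx hagx, Dx_mul ha hgx, Dx_mul hb hgy]
  -- derivative of c₁
  have ec1 : Dx (c + (Dx (Dx g) + a * Dx g + b * Dy g) / g)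
      = Dx c + ((Dx (Dx (Dx g)) + (Dx a * Dx g + a * Dx (Dx g))
          + (Dx b * Dy g + b * Dx (Dy g))) * g
        - (Dx (Dx g) + a * Dx g + b * Dy g) * Dx g) / (g * g) := by
    have hEg : ContDiff ℝ (⊤ : ℕ∞) ((Dx (Dx g) + a * Dx g + b * Dy g) / g : F) := by
      exact hE.div hg hg0
    rw [Dx_add hc hEg, Dx_div hE hg hg0, eE]
  -- the gauge term 2 * Dx g / g
  have h2gx : ContDiff ℝ (⊤ : ℕ∞) (2 * Dx g : F) := by exact contDiff_two.mul hgx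
  have h2q : ContDiff ℝ (⊤ : ℕ∞) (2 * Dx g / g : F) := by exact h2gx.div hg hg0
  have e2gx : Dx (2 * Dx g : F) = 2 * Dx (Dx g) := by
    rw [Dx_mul contDiff_two hgx, Dx_two]
    funext p; simp
  have e2gxy : Dy (2 * Dx g : F) = 2 * Dx (Dy g) := by
    rw [Dy_mul contDiff_two hgx, Dy_two, Dy_Dx hg]
    funext p; simp
  -- derivative of a₁
  have ea1 : Dx (a + 2 * Dx g / g)
      = Dx a + (2 * Dx (Dx g) * g - 2 * Dx g * Dx g) / (g * g) := by
    rw [Dx_add ha h2q, Dx_div h2gx hg hg0, e2gx]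
  have ea1y : Dy (a + 2 * Dx g / g)
      = Dy a + (2 * Dx (Dy g) * g - 2 * Dx g * Dy g) / (g * g) := by
    rw [Dy_add ha h2q, Dy_div h2gx hg hg0, e2gxy]
  -- second derivative of a₁
  have h2gxx : ContDiff ℝ (⊤ : ℕ∞) (2 * Dx (Dx g) : F) := by exact contDiff_two.mul hgxx
  have hN1 : ContDiff ℝ (⊤ : ℕ∞) (2 * Dx (Dx g) * g : F) := by exact h2gxx.mul hg
  have hN2 : ContDiff ℝ (⊤ : ℕ∞) (2 * Dx g * Dx g : F) := by exact h2gx.mul hgx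
  have hN : ContDiff ℝ (⊤ : ℕ∞) (2 * Dx (Dx g) * g - 2 * Dx g * Dx g : F) := by
    exact hN1.sub hN2
  have hGG : ContDiff ℝ (⊤ : ℕ∞) (g * g : F) := by exact hg.mul hg
  have e2gxx : Dx (2 * Dx (Dx g) : F) = 2 * Dx (Dx (Dx g)) := by
    rw [Dx_mul contDiff_two hgxx, Dx_two]
    funext p; simp
  have eN : Dx ((2 * Dx (Dx g) * g - 2 * Dx g * Dx g : F))
      = (2 * Dx (Dx (Dx g)) * g + 2 * Dx (Dx g) * Dx g)
        - (2 * Dx (Dx g) * Dx g + 2 * Dx g * Dx (Dx g)) := by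
    rw [Dx_sub hN1 hN2, Dx_mul h2gxx hg, e2gxx, Dx_mul h2gx hgx, e2gx]
  have egg : Dx (g * g : F) = Dx g * g + g * Dx g := Dx_mul hg hg
  have hNq : ContDiff ℝ (⊤ : ℕ∞)
      ((2 * Dx (Dx g) * g - 2 * Dx g * Dx g) / (g * g) : F) := by
    exact hN.div hGG hgg0
  have ea1xx : Dx (Dx (a + 2 * Dx g / g))
      = Dx (Dx a)
        + ((((2 * Dx (Dx (Dx g)) * g + 2 * Dx (Dx g) * Dx g)
            - (2 * Dx (Dx g) * Dx g + 2 * Dx g * Dx (Dx g))) * (g * g)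
          - (2 * Dx (Dx g) * g - 2 * Dx g * Dx g) * (Dx g * g + g * Dx g))
          / ((g * g) * (g * g))) := by
    rw [ea1, Dx_add hax hNq, Dx_div hN hGG hgg0, eN, egg]
  -- now everything is pointwise algebra
  unfold I2
  rw [ec1, ea1xx, ea1, ea1y]
  funext p
  simp only [Pi.add_apply, Pi.sub_apply, Pi.mul_apply, Pi.div_apply,
    Pi.ofNat_apply, Pi.pow_apply]
  have hB := hb0 p
  have hG := hg0 p
  field_simp
  ring
end
end

section
/- Suppose L = Dx² + b·Dy + c (i.e. a = 0) with b a nonzero constant and I₂ = cₓ − (bₓ/b)·c = cₓ = 0 everywhere, so c = c(y) depends only on y. Then the gauge transformation with g = exp(−∫ c/b dy) transforms L into the constant-coefficient operator Dx² + b·Dy: for every smooth u, g⁻¹·L(g·u) = uₓₓ + b·u_y. -/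
noncomputable section
open Real

theorem gauge_to_constant_coefficients
    (b : ℝ) (hb : b ≠ 0) (c C : ℝ → ℝ) (hc : ContDiff ℝ (⊤ : ℕ∞) c) (hC : ContDiff ℝ (⊤ : ℕ∞) C)
    (hC' : ∀ y, deriv C y = c y / b)
    (g : F) (hg : g = fun p => Real.exp (-C p.2))
    (u : F) (hu : ContDiff ℝ (⊤ : ℕ∞) u) :
    ∀ p, (g p)⁻¹ *
        (Dx (Dx (g * u)) p + b * Dy (g * u) p + c p.2 * (g p * u p)) =
      Dx (Dx u) p + b * Dy u p := by
  subst hg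
  set φ : ℝ → ℝ := fun y => Real.exp (-C y) with hφdef
  have hφ : ∀ y, HasDerivAt φ (-(c y / b) * φ y) y := by
    intro y
    have h1 : HasDerivAt (fun y => -C y) (-(c y / b)) y := by
      have := (hC.differentiable (by simp) y).hasDerivAt
      rw [hC' y] at this
      exact this.neg
    simpa [hφdef, mul_comm] using h1.exp
  have hgF : ∀ p : ℝ × ℝ, HasFDerivAt (fun p : ℝ × ℝ => φ p.2)
      ((-(c p.2 / b) * φ p.2) • (ContinuousLinearMap.snd ℝ ℝ ℝ)) p := by
    intro p
    exact (hφ p.2).comp_hasFDerivAt p hasFDerivAt_snd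
  have hud : Differentiable ℝ u := hu.differentiable (by simp)
  -- first derivatives of g*u
  have hDx : Dx ((fun p : ℝ × ℝ => φ p.2) * u) = fun p => φ p.2 * Dx u p := by
    funext p
    have h := (hgF p).mul (hud p).hasFDerivAt
    rw [Dx]; show fderiv ℝ (fun y => φ y.2 * u y) p (1,0) = _; rw [show (fun y : ℝ × ℝ => φ y.2 * u y) = (fun p : ℝ × ℝ => φ p.2) * u from rfl, h.fderiv]
    simp [Dx]
  have hDy : ∀ p, Dy ((fun p : ℝ × ℝ => φ p.2) * u) p
      = φ p.2 * Dy u p + u p * (-(c p.2 / b) * φ p.2) := by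
    intro p
    have h := (hgF p).mul (hud p).hasFDerivAt
    rw [Dy]; show fderiv ℝ (fun y => φ y.2 * u y) p (0,1) = _; rw [show (fun y : ℝ × ℝ => φ y.2 * u y) = (fun p : ℝ × ℝ => φ p.2) * u from rfl, h.fderiv]
    simp [Dy]
  -- Dx u is smooth
  have hDxu : ContDiff ℝ (⊤ : ℕ∞) (Dx u) := by
    have := (hu.fderiv_right (m := (⊤ : ℕ∞)) (by simp))
    exact this.clm_apply contDiff_const
  have hDxx : ∀ p, Dx (Dx ((fun p : ℝ × ℝ => φ p.2) * u)) p = φ p.2 * Dx (Dx u) p := by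
    intro p
    rw [hDx]
    have h := (hgF p).mul ((hDxu.differentiable (by simp)) p).hasFDerivAt
    rw [Dx]; show fderiv ℝ (fun y => φ y.2 * Dx u y) p (1,0) = _; rw [show (fun y : ℝ × ℝ => φ y.2 * Dx u y) = (fun p : ℝ × ℝ => φ p.2) * Dx u from rfl, h.fderiv]
    simp [Dx]
  intro p
  rw [hDxx, hDy]
  have hφpos : φ p.2 ≠ 0 := (Real.exp_pos _).ne'
  field_simp
  ring
end
end

section
/- Let L(u) = uₓₓ + b·u_y + c·u and M(u) = uₓ + r·u. Set a₁ = −bₓ/b, b₁ = b, c₁ = c + r·bₓ/b − 2 rₓ, r₁ = r − bₓ/b, M₁(v) = vₓ + r₁·v, L₁(v) = vₓₓ + a₁·vₓ + b₁·v_y + c₁·v. Then M₁(L(u)) = L₁(M(u)) for all smooth u if and only if 0 = −c·bₓ/b + cₓ − r²·bₓ/b + 2 r rₓ + rₓ·bₓ/b − b r_y − rₓₓ holds identically. -/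
noncomputable section
open Real

/-- The degenerate first-order transforming operator M = Dx + r. -/
noncomputable def Xop (r : F) (u : F) : F := fun p => Dx u p + r p * u p

lemma contDiff_D (v : ℝ × ℝ) {f : F} (hf : ContDiff ℝ (⊤ : ℕ∞) f) :
    ContDiff ℝ (⊤ : ℕ∞) (fun p => fderiv ℝ f p v) :=
  (ContinuousLinearMap.apply ℝ ℝ v).contDiff.comp (hf.fderiv_right (by simp))

lemma contDiff_Dx {f : F} (hf : ContDiff ℝ (⊤ : ℕ∞) f) : ContDiff ℝ (⊤ : ℕ∞) (Dx f) :=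
  contDiff_D _ hf

lemma contDiff_Dy {f : F} (hf : ContDiff ℝ (⊤ : ℕ∞) f) : ContDiff ℝ (⊤ : ℕ∞) (Dy f) :=
  contDiff_D _ hf

lemma D_add (v : ℝ × ℝ) (f g : F) {p : ℝ × ℝ}
    (hf : DifferentiableAt ℝ f p) (hg : DifferentiableAt ℝ g p) :
    fderiv ℝ (fun q => f q + g q) p v = fderiv ℝ f p v + fderiv ℝ g p v := by
  rw [fderiv_fun_add hf hg]; simp

lemma D_mul (v : ℝ × ℝ) (f g : F) {p : ℝ × ℝ}
    (hf : DifferentiableAt ℝ f p) (hg : DifferentiableAt ℝ g p) :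
    fderiv ℝ (fun q => f q * g q) p v = fderiv ℝ f p v * g p + f p * fderiv ℝ g p v := by
  rw [fderiv_fun_mul hf hg]; simp; ring

lemma D_comm {u : F} (hu : ContDiff ℝ (⊤ : ℕ∞) u) (p v w : ℝ × ℝ) :
    fderiv ℝ (fun q => fderiv ℝ u q v) p w = fderiv ℝ (fun q => fderiv ℝ u q w) p v := by
  have hdu : Differentiable ℝ u := hu.differentiable (by simp)
  have hd2 : DifferentiableAt ℝ (fderiv ℝ u) p :=
    ((hu.fderiv_right (m := (⊤ : ℕ∞)) (by simp)).differentiable (by simp)) p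
  have key : ∀ z : ℝ × ℝ, fderiv ℝ (fun q => fderiv ℝ u q z) p
      = (ContinuousLinearMap.apply ℝ ℝ z).comp (fderiv ℝ (fderiv ℝ u) p) := by
    intro z
    have : (fun q => fderiv ℝ u q z)
        = (ContinuousLinearMap.apply ℝ ℝ z) ∘ (fderiv ℝ u) := rfl
    rw [this, fderiv_comp p (ContinuousLinearMap.apply ℝ ℝ z).differentiableAt hd2,
      ContinuousLinearMap.fderiv]
  rw [key v, key w]
  simpa using second_derivative_symmetric (fun y => (hdu y).hasFDerivAt) hd2.hasFDerivAt w v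

lemma key_identity (b c r : F) (hb : ContDiff ℝ (⊤ : ℕ∞) b) (hc : ContDiff ℝ (⊤ : ℕ∞) c)
    (hr : ContDiff ℝ (⊤ : ℕ∞) r) (hb0 : ∀ p, b p ≠ 0) (u : F) (hu : ContDiff ℝ (⊤ : ℕ∞) u) (p : ℝ × ℝ) :
    Xop (r - Dx b / b) (Lop 0 b c u) p
      - Lop (-(Dx b / b)) b (c + r * Dx b / b - 2 * Dx r) (Xop r u) p
    = (-c p * Dx b p / b p + Dx c p - (r p) ^ 2 * Dx b p / b p
          + 2 * r p * Dx r p + Dx r p * Dx b p / b p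
          - b p * Dy r p - Dx (Dx r) p) * u p := by
  have du : Differentiable ℝ u := hu.differentiable (by simp)
  have db : Differentiable ℝ b := hb.differentiable (by simp)
  have dc : Differentiable ℝ c := hc.differentiable (by simp)
  have dr : Differentiable ℝ r := hr.differentiable (by simp)
  have dux : Differentiable ℝ (Dx u) := (contDiff_Dx hu).differentiable (by simp)
  have duy : Differentiable ℝ (Dy u) := (contDiff_Dy hu).differentiable (by simp)
  have duxx : Differentiable ℝ (Dx (Dx u)) :=
    (contDiff_Dx (contDiff_Dx hu)).differentiable (by simp)
  have drx : Differentiable ℝ (Dx r) := (contDiff_Dx hr).differentiable (by simp)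
  -- the function L₀ u rewritten
  have hL : Lop 0 b c u = fun q => Dx (Dx u) q + (b q * Dy u q + c q * u q) := by
    funext q; simp [Lop]; ring
  -- derivative of L₀ u
  have e1 : Dx (Lop 0 b c u) p = Dx (Dx (Dx u)) p
      + ((Dx b p * Dy u p + b p * Dx (Dy u) p) + (Dx c p * u p + c p * Dx u p)) := by
    rw [hL]
    show fderiv ℝ _ p (1, 0) = _
    rw [D_add (1, 0) (Dx (Dx u)) (fun q => b q * Dy u q + c q * u q) (duxx p)
        (((db p).mul (duy p)).add ((dc p).mul (du p))),
      D_add (1, 0) (fun q => b q * Dy u q) (fun q => c q * u q)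
        ((db p).mul (duy p)) ((dc p).mul (du p)),
      D_mul (1, 0) b (Dy u) (db p) (duy p), D_mul (1, 0) c u (dc p) (du p)]
    rfl
  -- first derivatives of X u
  have e2 : Dx (Xop r u) = fun q => Dx (Dx u) q + (Dx r q * u q + r q * Dx u q) := by
    funext q
    show fderiv ℝ (fun z => Dx u z + r z * u z) q (1, 0) = _
    rw [D_add (1, 0) (Dx u) (fun z => r z * u z) (dux q) ((dr q).mul (du q)),
      D_mul (1, 0) r u (dr q) (du q)]
    rfl
  have e4 : Dy (Xop r u) p = Dy (Dx u) p + (Dy r p * u p + r p * Dy u p) := by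
    show fderiv ℝ (fun z => Dx u z + r z * u z) p (0, 1) = _
    rw [D_add (0, 1) (Dx u) (fun z => r z * u z) (dux p) ((dr p).mul (du p)),
      D_mul (0, 1) r u (dr p) (du p)]
    rfl
  -- second x-derivative of X u
  have e3 : Dx (Dx (Xop r u)) p = Dx (Dx (Dx u)) p
      + ((Dx (Dx r) p * u p + Dx r p * Dx u p) + (Dx r p * Dx u p + r p * Dx (Dx u) p)) := by
    rw [e2]
    show fderiv ℝ _ p (1, 0) = _
    rw [D_add (1, 0) (Dx (Dx u)) (fun q => Dx r q * u q + r q * Dx u q) (duxx p)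
        (((drx p).mul (du p)).add ((dr p).mul (dux p))),
      D_add (1, 0) (fun q => Dx r q * u q) (fun q => r q * Dx u q)
        ((drx p).mul (du p)) ((dr p).mul (dux p)),
      D_mul (1, 0) (Dx r) u (drx p) (du p), D_mul (1, 0) r (Dx u) (dr p) (dux p)]
    rfl
  -- symmetry of mixed partials
  have e5 : Dy (Dx u) p = Dx (Dy u) p := D_comm hu p (1, 0) (0, 1)
  have hB := hb0 p
  show Dx (Lop 0 b c u) p + (r - Dx b / b) p * Lop 0 b c u p
      - (Dx (Dx (Xop r u)) p + (-(Dx b / b)) p * Dx (Xop r u) p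
        + b p * Dy (Xop r u) p + (c + r * Dx b / b - 2 * Dx r) p * Xop r u p) = _
  rw [e1, e3, e4, e5, e2]
  simp only [Pi.sub_apply, Pi.div_apply, Pi.add_apply, Pi.mul_apply, Pi.neg_apply,
    Pi.ofNat_apply, Lop, Xop, Pi.zero_apply]
  field_simp
  ring

theorem X_transformation_condition
    (b c r : F) (hb : ContDiff ℝ (⊤ : ℕ∞) b) (hc : ContDiff ℝ (⊤ : ℕ∞) c)
    (hr : ContDiff ℝ (⊤ : ℕ∞) r) (hb0 : ∀ p, b p ≠ 0) :
    (∀ u : F, ContDiff ℝ (⊤ : ℕ∞) u →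
        ∀ p, Xop (r - Dx b / b) (Lop 0 b c u) p =
          Lop (-(Dx b / b)) b (c + r * Dx b / b - 2 * Dx r) (Xop r u) p)
    ↔ (∀ p, 0 = -c p * Dx b p / b p + Dx c p - (r p) ^ 2 * Dx b p / b p
          + 2 * r p * Dx r p + Dx r p * Dx b p / b p
          - b p * Dy r p - Dx (Dx r) p) := by
  constructor
  · intro h p
    have hk := key_identity b c r hb hc hr hb0 (fun _ => 1) contDiff_const p
    rw [h (fun _ => 1) contDiff_const p, sub_self] at hk
    simpa using hk
  · intro h u hu p
    have hk := key_identity b c r hb hc hr hb0 u hu p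
    rw [← h p, zero_mul] at hk
    linarith [hk]
end
end

section
/- For L(u) = uₓₓ + b·u_y + c·u (with a = 0) and M(u) = u_y + r·u, if there exist smooth r₁, a₁, c₁ such that the intertwining identity (D_y + r₁)(L(u)) = (Dx² + a₁ Dx + b Dy + c₁)(M(u)) holds for all smooth u, then necessarily rₓ = 0 and c_y − r·b_y − b·r_y = 0. -/
noncomputable section
open Real

/-- The degenerate first-order operator M = Dy + r. -/
noncomputable def Yop (r : F) (u : F) : F := fun p => Dy u p + r p * u p

/-! ### Toolkit -/

lemma diffAt {f : F} (hf : ContDiff ℝ (⊤ : ℕ∞) f) (p : ℝ × ℝ) : DifferentiableAt ℝ f p :=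
  hf.differentiable (by simp) p

@[simp] lemma Dx_const (k : ℝ) : Dx (fun _ => k) = fun _ => 0 := by
  funext p; simp [Dx]

@[simp] lemma Dy_const (k : ℝ) : Dy (fun _ => k) = fun _ => 0 := by
  funext p; simp [Dy]

lemma fderiv_x (a : ℝ) (p : ℝ × ℝ) :
    fderiv ℝ (fun q : ℝ × ℝ => q.1 - a) p = ContinuousLinearMap.fst ℝ ℝ ℝ := by
  have : (fun q : ℝ × ℝ => q.1 - a) = fun q : ℝ × ℝ => Prod.fst q - a := rfl
  rw [this, fderiv_sub_const, fderiv_fst]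

lemma fderiv_y (a : ℝ) (p : ℝ × ℝ) :
    fderiv ℝ (fun q : ℝ × ℝ => q.2 - a) p = ContinuousLinearMap.snd ℝ ℝ ℝ := by
  have : (fun q : ℝ × ℝ => q.2 - a) = fun q : ℝ × ℝ => Prod.snd q - a := rfl
  rw [this, fderiv_sub_const, fderiv_snd]

@[simp] lemma Dx_x (a : ℝ) : Dx (fun q : ℝ × ℝ => q.1 - a) = fun _ => 1 := by
  funext p; simp [Dx, fderiv_x]

@[simp] lemma Dy_x (a : ℝ) : Dy (fun q : ℝ × ℝ => q.1 - a) = fun _ => 0 := by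
  funext p; simp [Dy, fderiv_x]

@[simp] lemma Dx_y (a : ℝ) : Dx (fun q : ℝ × ℝ => q.2 - a) = fun _ => 0 := by
  funext p; simp [Dx, fderiv_y]

@[simp] lemma Dy_y (a : ℝ) : Dy (fun q : ℝ × ℝ => q.2 - a) = fun _ => 1 := by
  funext p; simp [Dy, fderiv_y]

lemma Dx_add (f g : F) (p : ℝ × ℝ) (hf : DifferentiableAt ℝ f p)
    (hg : DifferentiableAt ℝ g p) :
    Dx (fun q => f q + g q) p = Dx f p + Dx g p := by
  simp [Dx, fderiv_fun_add hf hg]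

lemma Dy_add (f g : F) (p : ℝ × ℝ) (hf : DifferentiableAt ℝ f p)
    (hg : DifferentiableAt ℝ g p) :
    Dy (fun q => f q + g q) p = Dy f p + Dy g p := by
  simp [Dy, fderiv_fun_add hf hg]

lemma Dx_mul (f g : F) (p : ℝ × ℝ) (hf : DifferentiableAt ℝ f p)
    (hg : DifferentiableAt ℝ g p) :
    Dx (fun q => f q * g q) p = Dx f p * g p + f p * Dx g p := by
  simp [Dx, fderiv_fun_mul hf hg]; ring

lemma Dy_mul (f g : F) (p : ℝ × ℝ) (hf : DifferentiableAt ℝ f p)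
    (hg : DifferentiableAt ℝ g p) :
    Dy (fun q => f q * g q) p = Dy f p * g p + f p * Dy g p := by
  simp [Dy, fderiv_fun_mul hf hg]; ring

lemma Dx_add' (f g : F) (hf : ContDiff ℝ (⊤ : ℕ∞) f) (hg : ContDiff ℝ (⊤ : ℕ∞) g) :
    Dx (fun q => f q + g q) = fun q => Dx f q + Dx g q :=
  funext fun p => Dx_add f g p (diffAt hf p) (diffAt hg p)

lemma Dy_add' (f g : F) (hf : ContDiff ℝ (⊤ : ℕ∞) f) (hg : ContDiff ℝ (⊤ : ℕ∞) g) :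
    Dy (fun q => f q + g q) = fun q => Dy f q + Dy g q :=
  funext fun p => Dy_add f g p (diffAt hf p) (diffAt hg p)

lemma Dx_mul' (f g : F) (hf : ContDiff ℝ (⊤ : ℕ∞) f) (hg : ContDiff ℝ (⊤ : ℕ∞) g) :
    Dx (fun q => f q * g q) = fun q => Dx f q * g q + f q * Dx g q :=
  funext fun p => Dx_mul f g p (diffAt hf p) (diffAt hg p)

lemma Dy_mul' (f g : F) (hf : ContDiff ℝ (⊤ : ℕ∞) f) (hg : ContDiff ℝ (⊤ : ℕ∞) g) :
    Dy (fun q => f q * g q) = fun q => Dy f q * g q + f q * Dy g q :=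
  funext fun p => Dy_mul f g p (diffAt hf p) (diffAt hg p)

theorem Y_transformation_constraints
    (b c r r₁ a₁ c₁ : F) (hb : ContDiff ℝ (⊤ : ℕ∞) b) (hc : ContDiff ℝ (⊤ : ℕ∞) c)
    (hr : ContDiff ℝ (⊤ : ℕ∞) r) (hr₁ : ContDiff ℝ (⊤ : ℕ∞) r₁) (ha₁ : ContDiff ℝ (⊤ : ℕ∞) a₁)
    (hc₁ : ContDiff ℝ (⊤ : ℕ∞) c₁) (hb0 : ∀ p, b p ≠ 0)
    (hint : ∀ u : F, ContDiff ℝ (⊤ : ℕ∞) u →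
      ∀ p, Yop r₁ (Lop 0 b c u) p = Lop a₁ b c₁ (Yop r u) p) :
    ∀ p, Dx r p = 0 ∧ Dy c p - r p * Dy b p - b p * Dy r p = 0 := by
  have hdr : ContDiff ℝ (⊤ : ℕ∞) (Dx r) := contDiff_Dx hr
  -- test function u = 1  (equation A)
  have keyA : ∀ p : ℝ × ℝ, Dy c p + r₁ p * c p
      = Dx (Dx r) p + a₁ p * Dx r p + b p * Dy r p + c₁ p * r p := by
    intro p
    have h := hint (fun _ => 1) contDiff_const p
    have hL : Lop 0 b c (fun _ => 1) = c := by
      funext q; simp [Lop]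
    have hY : Yop r (fun _ => 1) = r := by
      funext q; simp [Yop]
    rw [hL, hY] at h
    simpa [Yop, Lop] using h
  -- test function u = x - p.1  (equation B)
  have keyB : ∀ p : ℝ × ℝ, (0 : ℝ) = 2 * Dx r p + a₁ p * r p := by
    intro p
    have hu : ContDiff ℝ (⊤ : ℕ∞) (fun q : ℝ × ℝ => q.1 - p.1) :=
      contDiff_fst.sub contDiff_const
    have h := hint (fun q => q.1 - p.1) hu p
    have hL : Lop 0 b c (fun q : ℝ × ℝ => q.1 - p.1)
        = fun q => c q * (q.1 - p.1) := by
      funext q; simp [Lop]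
    have hY : Yop r (fun q : ℝ × ℝ => q.1 - p.1)
        = fun q => r q * (q.1 - p.1) := by
      funext q; simp [Yop]
    rw [hL, hY] at h
    -- left side
    have hDyL : Dy (fun q => c q * (q.1 - p.1)) p = 0 := by
      rw [Dy_mul c (fun q => q.1 - p.1) p (diffAt hc p) (diffAt hu p)]
      simp
    -- right side pieces
    have hDxv : Dx (fun q => r q * (q.1 - p.1))
        = fun q => Dx r q * (q.1 - p.1) + r q := by
      rw [Dx_mul' r (fun q => q.1 - p.1) hr hu]; simp
    have hDxxv : Dx (Dx (fun q => r q * (q.1 - p.1))) p = 2 * Dx r p := by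
      rw [hDxv,
        Dx_add (fun q => Dx r q * (q.1 - p.1)) r p
          ((diffAt hdr p).mul (diffAt hu p)) (diffAt hr p),
        Dx_mul (Dx r) (fun q => q.1 - p.1) p (diffAt hdr p) (diffAt hu p)]
      simp; ring
    have hDyv : Dy (fun q => r q * (q.1 - p.1)) p = 0 := by
      rw [Dy_mul r (fun q => q.1 - p.1) p (diffAt hr p) (diffAt hu p)]
      simp
    rw [Yop, Lop] at h
    rw [hDyL, hDxxv, hDyv, hDxv] at h
    simpa using h
  -- test function u = y - p.2  (equation C)
  have keyC : ∀ p : ℝ × ℝ, Dy b p + c p + r₁ p * b p = b p * r p + c₁ p := by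
    intro p
    have hu : ContDiff ℝ (⊤ : ℕ∞) (fun q : ℝ × ℝ => q.2 - p.2) :=
      contDiff_snd.sub contDiff_const
    have h := hint (fun q => q.2 - p.2) hu p
    have hL : Lop 0 b c (fun q : ℝ × ℝ => q.2 - p.2)
        = fun q => b q + c q * (q.2 - p.2) := by
      funext q; simp [Lop]
    have hY : Yop r (fun q : ℝ × ℝ => q.2 - p.2)
        = fun q => 1 + r q * (q.2 - p.2) := by
      funext q; simp [Yop]
    rw [hL, hY] at h
    have hDyL : Dy (fun q => b q + c q * (q.2 - p.2)) p = Dy b p + c p := by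
      rw [Dy_add b (fun q => c q * (q.2 - p.2)) p (diffAt hb p)
          ((diffAt hc p).mul (diffAt hu p)),
        Dy_mul c (fun q => q.2 - p.2) p (diffAt hc p) (diffAt hu p)]
      simp
    have hDxv : Dx (fun q => 1 + r q * (q.2 - p.2))
        = fun q => Dx r q * (q.2 - p.2) := by
      rw [Dx_add' (fun _ => 1) (fun q => r q * (q.2 - p.2)) contDiff_const
          (hr.mul hu),
        Dx_mul' r (fun q => q.2 - p.2) hr hu]
      simp
    have hDxxv : Dx (Dx (fun q => 1 + r q * (q.2 - p.2))) p = 0 := by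
      rw [hDxv, Dx_mul (Dx r) (fun q => q.2 - p.2) p (diffAt hdr p) (diffAt hu p)]
      simp
    have hDyv : Dy (fun q => 1 + r q * (q.2 - p.2)) p = r p := by
      rw [Dy_add (fun _ => 1) (fun q => r q * (q.2 - p.2)) p
          (differentiableAt_const _) ((diffAt hr p).mul (diffAt hu p)),
        Dy_mul r (fun q => q.2 - p.2) p (diffAt hr p) (diffAt hu p)]
      simp
    rw [Yop, Lop] at h
    rw [hDyL, hDxxv, hDyv, hDxv] at h
    simp at h
    linarith [h]
  -- test function u = (x - p.1)(y - p.2)  (equation D : a₁ = 0)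
  have keyD : ∀ p : ℝ × ℝ, a₁ p = 0 := by
    intro p
    have hu1 : ContDiff ℝ (⊤ : ℕ∞) (fun q : ℝ × ℝ => q.1 - p.1) :=
      contDiff_fst.sub contDiff_const
    have hu2 : ContDiff ℝ (⊤ : ℕ∞) (fun q : ℝ × ℝ => q.2 - p.2) :=
      contDiff_snd.sub contDiff_const
    have hu : ContDiff ℝ (⊤ : ℕ∞) (fun q : ℝ × ℝ => (q.1 - p.1) * (q.2 - p.2)) :=
      hu1.mul hu2
    have h := hint (fun q => (q.1 - p.1) * (q.2 - p.2)) hu p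
    have hDxu : Dx (fun q : ℝ × ℝ => (q.1 - p.1) * (q.2 - p.2))
        = fun q => q.2 - p.2 := by
      rw [Dx_mul' (fun q => q.1 - p.1) (fun q => q.2 - p.2) hu1 hu2]; simp
    have hDyu : Dy (fun q : ℝ × ℝ => (q.1 - p.1) * (q.2 - p.2))
        = fun q => q.1 - p.1 := by
      rw [Dy_mul' (fun q => q.1 - p.1) (fun q => q.2 - p.2) hu1 hu2]; simp
    have hL : Lop 0 b c (fun q : ℝ × ℝ => (q.1 - p.1) * (q.2 - p.2))
        = fun q => b q * (q.1 - p.1) + c q * ((q.1 - p.1) * (q.2 - p.2)) := by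
      funext q; simp [Lop, hDxu, hDyu]
    have hY : Yop r (fun q : ℝ × ℝ => (q.1 - p.1) * (q.2 - p.2))
        = fun q => (q.1 - p.1) + r q * ((q.1 - p.1) * (q.2 - p.2)) := by
      funext q; simp [Yop, hDyu]
    rw [hL, hY] at h
    have hDyL : Dy (fun q => b q * (q.1 - p.1) + c q * ((q.1 - p.1) * (q.2 - p.2))) p
        = 0 := by
      rw [Dy_add (fun q => b q * (q.1 - p.1))
          (fun q => c q * ((q.1 - p.1) * (q.2 - p.2))) p
          ((diffAt hb p).mul (diffAt hu1 p)) ((diffAt hc p).mul (diffAt hu p)),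
        Dy_mul b (fun q => q.1 - p.1) p (diffAt hb p) (diffAt hu1 p),
        Dy_mul c (fun q => (q.1 - p.1) * (q.2 - p.2)) p (diffAt hc p) (diffAt hu p),
        hDyu]
      simp
    have hDxv : Dx (fun q => (q.1 - p.1) + r q * ((q.1 - p.1) * (q.2 - p.2)))
        = fun q => 1 + (Dx r q * ((q.1 - p.1) * (q.2 - p.2)) + r q * (q.2 - p.2)) := by
      rw [Dx_add' (fun q => q.1 - p.1)
          (fun q => r q * ((q.1 - p.1) * (q.2 - p.2))) hu1 (hr.mul hu),
        Dx_mul' r (fun q => (q.1 - p.1) * (q.2 - p.2)) hr hu, hDxu]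
      simp
    have hDxxv : Dx (Dx (fun q => (q.1 - p.1) + r q * ((q.1 - p.1) * (q.2 - p.2)))) p
        = 0 := by
      rw [hDxv,
        Dx_add (fun _ => 1)
          (fun q => Dx r q * ((q.1 - p.1) * (q.2 - p.2)) + r q * (q.2 - p.2)) p
          (differentiableAt_const _)
          (((diffAt hdr p).mul (diffAt hu p)).add ((diffAt hr p).mul (diffAt hu2 p))),
        Dx_add (fun q => Dx r q * ((q.1 - p.1) * (q.2 - p.2)))
          (fun q => r q * (q.2 - p.2)) p
          ((diffAt hdr p).mul (diffAt hu p)) ((diffAt hr p).mul (diffAt hu2 p)),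
        Dx_mul (Dx r) (fun q => (q.1 - p.1) * (q.2 - p.2)) p (diffAt hdr p) (diffAt hu p),
        Dx_mul r (fun q => q.2 - p.2) p (diffAt hr p) (diffAt hu2 p), hDxu]
      simp
    have hDyv : Dy (fun q => (q.1 - p.1) + r q * ((q.1 - p.1) * (q.2 - p.2))) p
        = 0 := by
      rw [Dy_add (fun q => q.1 - p.1)
          (fun q => r q * ((q.1 - p.1) * (q.2 - p.2))) p
          (diffAt hu1 p) ((diffAt hr p).mul (diffAt hu p)),
        Dy_mul r (fun q => (q.1 - p.1) * (q.2 - p.2)) p (diffAt hr p) (diffAt hu p),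
        hDyu]
      simp
    rw [Yop, Lop] at h
    rw [hDyL, hDxxv, hDyv, hDxv] at h
    simp at h
    linarith [h]
  -- test function u = (x - p.1)²  (equation E : r₁ = r)
  have keyE : ∀ p : ℝ × ℝ, r₁ p = r p := by
    intro p
    have hu1 : ContDiff ℝ (⊤ : ℕ∞) (fun q : ℝ × ℝ => q.1 - p.1) :=
      contDiff_fst.sub contDiff_const
    have hu : ContDiff ℝ (⊤ : ℕ∞) (fun q : ℝ × ℝ => (q.1 - p.1) * (q.1 - p.1)) :=
      hu1.mul hu1
    have h := hint (fun q => (q.1 - p.1) * (q.1 - p.1)) hu p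
    have hDxu : Dx (fun q : ℝ × ℝ => (q.1 - p.1) * (q.1 - p.1))
        = fun q => (q.1 - p.1) + (q.1 - p.1) := by
      rw [Dx_mul' (fun q => q.1 - p.1) (fun q => q.1 - p.1) hu1 hu1]; simp
    have hDyu : Dy (fun q : ℝ × ℝ => (q.1 - p.1) * (q.1 - p.1))
        = fun _ => 0 := by
      rw [Dy_mul' (fun q => q.1 - p.1) (fun q => q.1 - p.1) hu1 hu1]; simp
    have hDxsum : Dx (fun q : ℝ × ℝ => q.1 - p.1 + (q.1 - p.1)) = fun _ => (2 : ℝ) := by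
      funext q
      rw [Dx_add (fun q => q.1 - p.1) (fun q => q.1 - p.1) q (diffAt hu1 q) (diffAt hu1 q)]
      simp; norm_num
    have hL : Lop 0 b c (fun q : ℝ × ℝ => (q.1 - p.1) * (q.1 - p.1))
        = fun q => 2 + c q * ((q.1 - p.1) * (q.1 - p.1)) := by
      funext q; simp [Lop, hDxu, hDyu, hDxsum]
    have hY : Yop r (fun q : ℝ × ℝ => (q.1 - p.1) * (q.1 - p.1))
        = fun q => r q * ((q.1 - p.1) * (q.1 - p.1)) := by
      funext q; simp [Yop, hDyu]
    rw [hL, hY] at h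
    have hDyL : Dy (fun q => 2 + c q * ((q.1 - p.1) * (q.1 - p.1))) p = 0 := by
      rw [Dy_add (fun _ => 2) (fun q => c q * ((q.1 - p.1) * (q.1 - p.1))) p
          (differentiableAt_const _) ((diffAt hc p).mul (diffAt hu p)),
        Dy_mul c (fun q => (q.1 - p.1) * (q.1 - p.1)) p (diffAt hc p) (diffAt hu p),
        hDyu]
      simp
    have hDxv : Dx (fun q => r q * ((q.1 - p.1) * (q.1 - p.1)))
        = fun q => Dx r q * ((q.1 - p.1) * (q.1 - p.1))
            + r q * ((q.1 - p.1) + (q.1 - p.1)) := by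
      rw [Dx_mul' r (fun q => (q.1 - p.1) * (q.1 - p.1)) hr hu, hDxu]
    have hDxxv : Dx (Dx (fun q => r q * ((q.1 - p.1) * (q.1 - p.1)))) p
        = 2 * r p := by
      rw [hDxv,
        Dx_add (fun q => Dx r q * ((q.1 - p.1) * (q.1 - p.1)))
          (fun q => r q * ((q.1 - p.1) + (q.1 - p.1))) p
          ((diffAt hdr p).mul (diffAt hu p))
          ((diffAt hr p).mul ((diffAt hu1 p).add (diffAt hu1 p))),
        Dx_mul (Dx r) (fun q => (q.1 - p.1) * (q.1 - p.1)) p (diffAt hdr p) (diffAt hu p),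
        Dx_mul r (fun q => (q.1 - p.1) + (q.1 - p.1)) p (diffAt hr p)
          ((diffAt hu1 p).add (diffAt hu1 p)),
        hDxu, Dx_add (fun q => q.1 - p.1) (fun q => q.1 - p.1) p (diffAt hu1 p) (diffAt hu1 p)]
      simp; ring
    have hDyv : Dy (fun q => r q * ((q.1 - p.1) * (q.1 - p.1))) p = 0 := by
      rw [Dy_mul r (fun q => (q.1 - p.1) * (q.1 - p.1)) p (diffAt hr p) (diffAt hu p),
        hDyu]
      simp
    rw [Yop, Lop] at h
    rw [hDyL, hDxxv, hDyv, hDxv] at h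
    simp at h
    linarith [h]
  -- conclude
  have hrx : ∀ p : ℝ × ℝ, Dx r p = 0 := by
    intro p
    have hB := keyB p
    have hD := keyD p
    rw [hD] at hB
    linarith
  have hDxr0 : Dx r = fun _ => 0 := funext hrx
  have hrxx : ∀ p : ℝ × ℝ, Dx (Dx r) p = 0 := by
    intro p
    rw [hDxr0, Dx_const]
  intro p
  refine ⟨hrx p, ?_⟩
  have e1 := keyA p
  have e2 := keyC p
  rw [keyE p] at e1 e2
  rw [hrxx p, keyD p, hrx p] at e1
  have hc1 : c₁ p = Dy b p + c p := by linear_combination -e2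
  rw [hc1] at e1
  linear_combination e1
end
end

section
/- X-transformations preserve the Moutard-type class L = Dx² − Dy + c: if M(u) = uₓ + r·u where r satisfies cₓ + 2 r rₓ + r_y − rₓₓ = 0, then with L₁ = Dx² − Dy + (c − 2rₓ) and M₁ = M one has M(L(u)) = L₁(M(u)) for all smooth u. -/
noncomputable section
open Real

lemma Dapp_contDiff (f : F) (hf : ContDiff ℝ (⊤ : ℕ∞) f) (v : ℝ × ℝ) :
    ContDiff ℝ (⊤ : ℕ∞) (fun p => fderiv ℝ f p v) :=
  (hf.fderiv_right (by simp)).clm_apply contDiff_const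

lemma Dx_contDiff (f : F) (hf : ContDiff ℝ (⊤ : ℕ∞) f) : ContDiff ℝ (⊤ : ℕ∞) (Dx f) :=
  Dapp_contDiff f hf _

lemma Dy_contDiff (f : F) (hf : ContDiff ℝ (⊤ : ℕ∞) f) : ContDiff ℝ (⊤ : ℕ∞) (Dy f) :=
  Dapp_contDiff f hf _

lemma Dv_add (f g : F) (hf : Differentiable ℝ f) (hg : Differentiable ℝ g)
    (v : ℝ × ℝ) (p : ℝ × ℝ) :
    fderiv ℝ (fun q => f q + g q) p v = fderiv ℝ f p v + fderiv ℝ g p v := by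
  rw [fderiv_fun_add (hf p) (hg p)]; simp

lemma Dv_sub (f g : F) (hf : Differentiable ℝ f) (hg : Differentiable ℝ g)
    (v : ℝ × ℝ) (p : ℝ × ℝ) :
    fderiv ℝ (fun q => f q - g q) p v = fderiv ℝ f p v - fderiv ℝ g p v := by
  rw [fderiv_fun_sub (hf p) (hg p)]; simp

lemma Dv_mul (f g : F) (hf : Differentiable ℝ f) (hg : Differentiable ℝ g)
    (v : ℝ × ℝ) (p : ℝ × ℝ) :
    fderiv ℝ (fun q => f q * g q) p v = fderiv ℝ f p v * g p + f p * fderiv ℝ g p v := by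
  rw [fderiv_fun_mul (hf p) (hg p)]; simp; ring

lemma Dswap (u : F) (hu : ContDiff ℝ (⊤ : ℕ∞) u) (v w p : ℝ × ℝ) :
    fderiv ℝ (fun q => fderiv ℝ u q w) p v = fderiv ℝ (fun q => fderiv ℝ u q v) p w := by
  have hdu : Differentiable ℝ (fderiv ℝ u) :=
    (hu.fderiv_right (m := 1) (WithTop.coe_le_coe.mpr le_top)).differentiable one_ne_zero
  have key : ∀ z : ℝ × ℝ, fderiv ℝ (fun q => fderiv ℝ u q z) p =
      (ContinuousLinearMap.apply ℝ ℝ z).comp (fderiv ℝ (fderiv ℝ u) p) := by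
    intro z
    exact ((ContinuousLinearMap.apply ℝ ℝ z).hasFDerivAt.comp p (hdu p).hasFDerivAt).fderiv
  rw [key, key]
  simp only [ContinuousLinearMap.coe_comp', Function.comp_apply,
    ContinuousLinearMap.apply_apply]
  exact second_derivative_symmetric (f' := fderiv ℝ u)
    (fun y => ((hu.differentiable (by simp)) y).hasFDerivAt) (hdu p).hasFDerivAt v w

theorem X_transformation_preserves_moutard_class
    (c r : F) (hc : ContDiff ℝ (⊤ : ℕ∞) c) (hr : ContDiff ℝ (⊤ : ℕ∞) r)
    (hcond : ∀ p, Dx c p + 2 * r p * Dx r p + Dy r p - Dx (Dx r) p = 0)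
    (u : F) (hu : ContDiff ℝ (⊤ : ℕ∞) u) :
    ∀ p, Dx (fun q => Dx (Dx u) q - Dy u q + c q * u q) p
        + r p * (Dx (Dx u) p - Dy u p + c p * u p) =
      Dx (Dx (fun q => Dx u q + r q * u q)) p
        - Dy (fun q => Dx u q + r q * u q) p
        + (c p - 2 * Dx r p) * (Dx u p + r p * u p) := by
  intro p
  have hud : Differentiable ℝ u := hu.differentiable (by simp)
  have hux := Dx_contDiff u hu
  have huy := Dy_contDiff u hu
  have huxx := Dx_contDiff _ hux
  have hrd : Differentiable ℝ r := hr.differentiable (by simp)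
  have hrx := Dx_contDiff r hr
  have hcd : Differentiable ℝ c := hc.differentiable (by simp)
  -- Dx u + r*u differentiable pieces
  have hMu : ContDiff ℝ (⊤ : ℕ∞) (fun q => Dx u q + r q * u q) := hux.add (hr.mul hu)
  -- expand Dx (Dx (Dx u + r u))
  have e1 : Dx (fun q => Dx u q + r q * u q) =
      fun s => Dx (Dx u) s + (Dx r s * u s + r s * Dx u s) := by
    funext s
    show fderiv ℝ _ s (1,0) = _
    rw [Dv_add _ _ (hux.differentiable (by simp)) ((hr.mul hu).differentiable (by simp)),
      Dv_mul _ _ hrd hud]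
    rfl
  have e2 : Dx (Dx (fun q => Dx u q + r q * u q)) p =
      Dx (Dx (Dx u)) p + (Dx (Dx r) p * u p + Dx r p * Dx u p
        + (Dx r p * Dx u p + r p * Dx (Dx u) p)) := by
    rw [e1]
    show fderiv ℝ _ p (1,0) = _
    rw [Dv_add _ _ (huxx.differentiable (by simp))
        (((hrx.mul hu).add (hr.mul hux)).differentiable (by simp)),
      Dv_add _ _ ((hrx.mul hu).differentiable (by simp)) ((hr.mul hux).differentiable (by simp)),
      Dv_mul _ _ (hrx.differentiable (by simp)) hud, Dv_mul _ _ hrd (hux.differentiable (by simp))]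
    rfl
  have e3 : Dy (fun q => Dx u q + r q * u q) p =
      Dx (Dy u) p + (Dy r p * u p + r p * Dy u p) := by
    show fderiv ℝ _ p (0,1) = _
    rw [Dv_add _ _ (hux.differentiable (by simp)) ((hr.mul hu).differentiable (by simp)),
      Dv_mul _ _ hrd hud]
    have := Dswap u hu (0,1) (1,0) p
    show fderiv ℝ (fun q => fderiv ℝ u q (1,0)) p (0,1) + _ = _
    rw [this]
    rfl
  have e4 : Dx (fun q => Dx (Dx u) q - Dy u q + c q * u q) p =
      (Dx (Dx (Dx u)) p - Dx (Dy u) p) + (Dx c p * u p + c p * Dx u p) := by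
    show fderiv ℝ _ p (1,0) = _
    rw [Dv_add _ _ ((huxx.sub huy).differentiable (by simp)) ((hc.mul hu).differentiable (by simp)),
      Dv_sub _ _ (huxx.differentiable (by simp)) (huy.differentiable (by simp)),
      Dv_mul _ _ hcd hud]
    rfl
  rw [e2, e3, e4]
  have h := hcond p
  linear_combination (u p) * h
end
end
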